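/- arXiv:2210.14671 — 3 statements merged into one kernel-verified Lean document; each statement's English description precedes it below -/
import Mathlib

section
/- For PSD matrices, the Bures-Wasserstein distance between an arbitrary PSD matrix Σ and a rank-one matrix ww^T satisfies d_BW^2(Σ, ww^T) = Tr(Σ) + ‖w‖² − 2·√(w^T Σ w). -/
/-!
With `Q = Σ^{1/2}` and `v = Q w`, the matrix `Q (w wᵀ) Q = v vᵀ` has rank one, so its positive
semidefinite square root is `v vᵀ / ‖v‖`, whose trace is `‖v‖ = √(wᵀ Σ w)`.
-/

open Matrix

/-- The positive semidefinite square root of a positive semidefinite matrix, as defined in the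
older Mathlib (`Matrix.PosSemidef.sqrt`, since removed). -/
noncomputable def Matrix.PosSemidef.sqrt {n : Type*} [Fintype n] [DecidableEq n]
    {A : Matrix n n ℝ} (hA : A.PosSemidef) : Matrix n n ℝ :=
  hA.1.eigenvectorUnitary.1 * diagonal ((↑) ∘ (fun x => Real.sqrt x) ∘ hA.1.eigenvalues) *
    (star hA.1.eigenvectorUnitary : Matrix n n ℝ)

open scoped MatrixOrder ComplexOrder

namespace Matrix

variable {n : Type*} [Fintype n]

lemma mul_vecMulVec_self_mul_transpose {m R : Type*} [CommSemiring R] (M : Matrix m n R)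
    (w : n → R) : M * vecMulVec w w * Mᵀ = vecMulVec (M *ᵥ w) (M *ᵥ w) := by
  rw [mul_vecMulVec, vecMulVec_mul, vecMul_transpose]

lemma dotProduct_transpose_mul_mulVec {m R : Type*} [Fintype m] [CommSemiring R]
    (M : Matrix m n R) (w : n → R) : w ⬝ᵥ (Mᵀ * M) *ᵥ w = (M *ᵥ w) ⬝ᵥ (M *ᵥ w) := by
  rw [← mulVec_mulVec, dotProduct_mulVec, vecMul_transpose]

variable [DecidableEq n]

lemma PosSemidef.eq_of_mul_self_eq {𝕜 : Type*} [RCLike 𝕜] {B C : Matrix n n 𝕜}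
    (hB : B.PosSemidef) (hC : C.PosSemidef) (h : B * B = C * C) : B = C :=
  (CFC.mul_self_eq_mul_self_iff B C hB.nonneg hC.nonneg).mp h

lemma PosSemidef.sqrt_eq_cfcSqrt {A : Matrix n n ℝ} (hA : A.PosSemidef) :
    hA.sqrt = CFC.sqrt A := by
  rw [CFC.sqrt_eq_real_sqrt A hA.nonneg, cfcₙ_eq_cfc (hf0 := by simp), hA.1.cfc_eq]
  rfl

lemma PosSemidef.sqrt_mul_sqrt {A : Matrix n n ℝ} (hA : A.PosSemidef) :
    hA.sqrt * hA.sqrt = A := by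
  rw [hA.sqrt_eq_cfcSqrt]
  exact CFC.sqrt_mul_sqrt_self A hA.nonneg

lemma PosSemidef.transpose_sqrt {A : Matrix n n ℝ} (hA : A.PosSemidef) :
    hA.sqrtᵀ = hA.sqrt := by
  rw [hA.sqrt_eq_cfcSqrt]
  exact (CFC.sqrt_nonneg A).posSemidef.1

/-- At `v = 0` both sides vanish, the right one because `0⁻¹ = 0`. -/
lemma PosSemidef.eq_inv_sqrt_smul_vecMulVec {B : Matrix n n ℝ} (hB : B.PosSemidef)
    {v : n → ℝ} (h : B * B = vecMulVec v v) : B = (√(v ⬝ᵥ v))⁻¹ • vecMulVec v v := by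
  refine hB.eq_of_mul_self_eq ?_ ?_
  · exact (posSemidef_vecMulVec_self_star v).smul (by positivity)
  rcases eq_or_ne v 0 with rfl | hv
  · simp [h]
  have hpos : 0 < v ⬝ᵥ v := by simpa using dotProduct_star_self_pos_iff.mpr hv
  rw [h, smul_mul_smul_comm, vecMulVec_mul_vecMulVec, vecMulVec_smul, smul_smul,
    ← mul_inv, Real.mul_self_sqrt hpos.le, inv_mul_cancel₀ hpos.ne', one_smul]

lemma PosSemidef.trace_eq_sqrt_of_mul_self_eq_vecMulVec {B : Matrix n n ℝ} (hB : B.PosSemidef)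
    {v : n → ℝ} (h : B * B = vecMulVec v v) : B.trace = √(v ⬝ᵥ v) := by
  rw [hB.eq_inv_sqrt_smul_vecMulVec h, trace_smul, trace_vecMulVec, smul_eq_mul,
    inv_mul_eq_div, Real.div_sqrt]

end Matrix

/-- For a PSD matrix `Σ` and a vector `w`, if `B` is the PSD square root of
`Σ^{1/2} (w wᵀ) Σ^{1/2}`, then
`d_BW²(Σ, wwᵀ) = Tr(Σ + wwᵀ - 2B) = Tr Σ + ‖w‖² - 2 √(wᵀ Σ w)`. -/
theorem stmt0 {d : ℕ} (S : Matrix (Fin d) (Fin d) ℝ) (hS : S.PosSemidef)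
    (w : Fin d → ℝ) (B : Matrix (Fin d) (Fin d) ℝ) (hB : B.PosSemidef)
    (hBB : B * B = hS.sqrt * (vecMulVec w w) * hS.sqrt) :
    (S + vecMulVec w w - (2 : ℝ) • B).trace
      = S.trace + w ⬝ᵥ w - 2 * Real.sqrt (w ⬝ᵥ (S *ᵥ w)) := by
  have hB_rankOne : B * B = vecMulVec (hS.sqrt *ᵥ w) (hS.sqrt *ᵥ w) := by
    rw [hBB, ← mul_vecMulVec_self_mul_transpose, hS.transpose_sqrt]
  have hSw : w ⬝ᵥ S *ᵥ w = (hS.sqrt *ᵥ w) ⬝ᵥ (hS.sqrt *ᵥ w) := by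
    rw [← dotProduct_transpose_mul_mulVec, hS.transpose_sqrt, hS.sqrt_mul_sqrt]
  rw [trace_sub, trace_add, trace_smul, trace_vecMulVec,
    hB.trace_eq_sqrt_of_mul_self_eq_vecMulVec hB_rankOne, hSw, smul_eq_mul]
end

section
/- The function Σ ↦ d_BW²(Σ, xx^T) = Tr(Σ) + ‖x‖² − 2√(x^T Σ x) is convex on the cone of PSD matrices, for any fixed x ∈ ℝ^d. -/
/-!
`Σ ↦ Tr Σ + ‖x‖²` is affine, and `Σ ↦ xᵀ Σ x` is linear and nonnegative on the PSD cone, so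
`Σ ↦ √(xᵀ Σ x)` is concave there as the composition of the concave square root with a linear map.
A linear function minus twice a concave one is convex.
-/

open Matrix

namespace Matrix

theorem convex_setOf_posSemidef {n : Type*} : Convex ℝ {S : Matrix n n ℝ | S.PosSemidef} :=
  fun _ hS _ hT _ _ ha hb _ => (hS.smul ha).add (hT.smul hb)

variable {n : Type*} [Fintype n]

def dotProductMulVecLinearMap (x : n → ℝ) : Matrix n n ℝ →ₗ[ℝ] ℝ where
  toFun S := x ⬝ᵥ (S *ᵥ x)
  map_add' S T := by simp only [add_mulVec, dotProduct_add]
  map_smul' c S := by simp only [smul_mulVec, dotProduct_smul, RingHom.id_apply]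

theorem concaveOn_sqrt_dotProduct_mulVec (x : n → ℝ) :
    ConcaveOn ℝ {S : Matrix n n ℝ | S.PosSemidef} (fun S => √(x ⬝ᵥ (S *ᵥ x))) :=
  (Real.strictConcaveOn_sqrt.concaveOn.comp_linearMap (dotProductMulVecLinearMap x)).subset
    (fun S hS => show 0 ≤ x ⬝ᵥ (S *ᵥ x) by simpa using hS.dotProduct_mulVec_nonneg x)
    convex_setOf_posSemidef

end Matrix

/-- The function `Σ ↦ d_BW²(Σ, xxᵀ) = Tr Σ + ‖x‖² - 2√(xᵀ Σ x)` is convex on the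
cone of PSD matrices, for any fixed `x`. -/
theorem stmt8 {d : ℕ} (x : Fin d → ℝ) :
    ConvexOn ℝ {S : Matrix (Fin d) (Fin d) ℝ | S.PosSemidef}
      (fun S => S.trace + x ⬝ᵥ x - 2 * Real.sqrt (x ⬝ᵥ (S *ᵥ x))) :=
  (((traceLinearMap (Fin d) ℝ ℝ).convexOn convex_setOf_posSemidef).add_const (x ⬝ᵥ x)).sub
    ((concaveOn_sqrt_dotProduct_mulVec x).smul zero_le_two)
end

section
/- In the population setting with S = vv^T in dimension 2 (WLOG), the only fixed points u of the map u ↦ 𝔼[(|v^Tx|/|u^Tx|) xx^T u] with x ∼ N(0,I) are u = ±v and vectors orthogonal to v (of appropriate norm); in particular, any unit-direction fixed point u not orthogonal to v must be parallel to v. -/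
/-!
Write `v = a • u + w` with `w ⟂ u`; then `a ≠ 0` because `⟪u, v⟫ ≠ 0`. Pairing the fixed-point
equation with `w` gives `𝔼[|a s + t| sign s · t] = 0`, where `s = ⟪u, x⟫` and `t = ⟪w, x⟫`. The
reflection fixing `u` and negating `w` preserves the standard Gaussian, so this expectation is
also `-𝔼[|a s - t| sign s · t]`. Hence it is half of `𝔼[sign s · t · (|a s + t| - |a s - t|)]`,
whose integrand has the sign of `a` and vanishes only on the null set `s t = 0`; so `w = 0`.
Nothing is specific to dimension 2.
-/

open Matrix MeasureTheory ProbabilityTheory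

open scoped RealInnerProductSpace

namespace Real

@[fun_prop]
lemma measurable_sign : Measurable Real.sign :=
  Measurable.ite measurableSet_Iio measurable_const
    (Measurable.ite measurableSet_Ioi measurable_const measurable_const)

lemma abs_sign_le_one (r : ℝ) : |Real.sign r| ≤ 1 := by
  rcases sign_apply_eq r with h | h | h <;> simp [h]

lemma sign_mul_self (r : ℝ) : Real.sign r * r = |r| := by
  rcases lt_trichotomy r 0 with h | rfl | h
  · simp [sign_of_neg h, abs_of_neg h]
  · simp
  · simp [sign_of_pos h, abs_of_pos h]

end Real

lemma mul_sign_mul_abs_sub_abs_eq (a s t : ℝ) :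
    a * (Real.sign s * t * (|a * s + t| - |a * s - t|)) * (|a * s + t| + |a * s - t|)
      = 4 * a ^ 2 * |s| * t ^ 2 := by
  have hsq : (|a * s + t| - |a * s - t|) * (|a * s + t| + |a * s - t|) = 4 * a * s * t := by
    linear_combination sq_abs (a * s + t) - sq_abs (a * s - t)
  rw [← Real.sign_mul_self s]
  linear_combination a * Real.sign s * t * hsq

lemma mul_sign_mul_abs_sub_abs_pos {a s t : ℝ} (ha : a ≠ 0) (hs : s ≠ 0) (ht : t ≠ 0) :
    0 < a * (Real.sign s * t * (|a * s + t| - |a * s - t|)) := by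
  have hsum : 0 < |a * s + t| + |a * s - t| :=
    calc 0 < |2 * a * s| := by positivity
      _ = |(a * s + t) + (a * s - t)| := by ring_nf
      _ ≤ _ := abs_add_le _ _
  refine (mul_pos_iff_of_pos_right hsum).mp ?_
  rw [mul_sign_mul_abs_sub_abs_eq]
  positivity

section StdGaussian

variable {E : Type*} [NormedAddCommGroup E] [InnerProductSpace ℝ E] [FiniteDimensional ℝ E]
  [MeasurableSpace E] [BorelSpace E]

lemma ae_inner_ne_zero_stdGaussian {u : E} (hu : u ≠ 0) :
    ∀ᵐ x ∂stdGaussian E, ⟪u, x⟫ ≠ 0 := by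
  have hmap := IsGaussian.map_eq_gaussianReal (μ := stdGaussian E) (innerSL ℝ u)
  rw [variance_dual_stdGaussian, innerSL_apply_norm] at hmap
  have : NullSingletonClass ((stdGaussian E).map (innerSL ℝ u)) := by
    rw [hmap]
    exact nullSingletonClass_gaussianReal (by simpa using hu)
  have h0 := measure_singleton (μ := (stdGaussian E).map (innerSL ℝ u)) 0
  rw [Measure.map_apply (by fun_prop) (measurableSet_singleton 0)] at h0
  exact ae_iff.mpr (by simpa [Set.preimage] using h0)

lemma measurePreserving_stdGaussian (f : E ≃ₗᵢ[ℝ] E) :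
    MeasurePreserving f (stdGaussian E) (stdGaussian E) :=
  ⟨f.continuous.measurable, stdGaussian_map f⟩

lemma integral_comp_linearIsometryEquiv_stdGaussian {F : Type*} [NormedAddCommGroup F]
    [NormedSpace ℝ F] (f : E ≃ₗᵢ[ℝ] E) (g : E → F) :
    ∫ x, g (f x) ∂stdGaussian E = ∫ x, g x ∂stdGaussian E :=
  (measurePreserving_stdGaussian f).integral_comp' (f := f.toHomeomorph.toMeasurableEquiv) g

/-- The paper's map `u ↦ 𝔼[(|vᵀx| / |uᵀx|) x xᵀ u]`, using `xᵀu / |uᵀx| = sign (uᵀx)`. -/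
noncomputable def populationMap (v u : E) : E :=
  ∫ x, (|⟪v, x⟫| * Real.sign ⟪u, x⟫) • x ∂stdGaussian E

lemma integrable_abs_inner_mul_sign_inner_smul (v u : E) :
    Integrable (fun x ↦ (|⟪v, x⟫| * Real.sign ⟪u, x⟫) • x) (stdGaussian E) := by
  refine ((IsGaussian.memLp_two_id.integrable_norm_pow two_ne_zero).const_mul ‖v‖).mono'
    (by fun_prop : Measurable _).aestronglyMeasurable (ae_of_all _ fun x ↦ ?_)
  have hsign := Real.abs_sign_le_one ⟪u, x⟫
  calc ‖(|⟪v, x⟫| * Real.sign ⟪u, x⟫) • x‖ = |⟪v, x⟫| * |Real.sign ⟪u, x⟫| * ‖x‖ := by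
        rw [norm_smul, Real.norm_eq_abs, abs_mul, abs_abs]
    _ ≤ ‖v‖ * ‖x‖ * 1 * ‖x‖ := by gcongr; exact abs_real_inner_le_norm v x
    _ = ‖v‖ * ‖id x‖ ^ 2 := by simp only [mul_one, id_eq]; ring

lemma integrable_abs_inner_mul_sign_inner_mul_inner (v u w : E) :
    Integrable (fun x ↦ |⟪v, x⟫| * Real.sign ⟪u, x⟫ * ⟪w, x⟫) (stdGaussian E) := by
  simpa [inner_smul_right] using
    (integrable_abs_inner_mul_sign_inner_smul v u).const_inner (𝕜 := ℝ) w

lemma inner_populationMap (v u w : E) :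
    ⟪w, populationMap v u⟫ = ∫ x, |⟪v, x⟫| * Real.sign ⟪u, x⟫ * ⟪w, x⟫ ∂stdGaussian E := by
  rw [populationMap, ← integral_inner (integrable_abs_inner_mul_sign_inner_smul v u)]
  simp [inner_smul_right]

lemma integral_abs_add_eq_neg_integral_abs_sub {u w : E} (huw : ⟪u, w⟫ = 0) (a : ℝ) :
    ∫ x, |a * ⟪u, x⟫ + ⟪w, x⟫| * Real.sign ⟪u, x⟫ * ⟪w, x⟫ ∂stdGaussian E
      = -∫ x, |a * ⟪u, x⟫ - ⟪w, x⟫| * Real.sign ⟪u, x⟫ * ⟪w, x⟫ ∂stdGaussian E := by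
  set R := (ℝ ∙ w)ᗮ.reflection
  have hR (y x : E) : ⟪y, R x⟫ = ⟪R y, x⟫ := by
    rw [← R.inner_map_map, Submodule.reflection_reflection]
  have hRu : R u = u := Submodule.reflection_mem_subspace_eq_self
    (Submodule.mem_orthogonal_singleton_iff_inner_right.mpr (by rwa [real_inner_comm]))
  have hRw : R w = -w := Submodule.reflection_orthogonalComplement_singleton_eq_neg w
  rw [← integral_neg, ← integral_comp_linearIsometryEquiv_stdGaussian R]
  congr 1 with x
  simp only [hR, hRu, hRw, inner_neg_left]
  ring_nf

lemma inner_populationMap_ne_zero {u w : E} (hu : u ≠ 0) (hw : w ≠ 0) (huw : ⟪u, w⟫ = 0)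
    {a : ℝ} (ha : a ≠ 0) : ⟪w, populationMap (a • u + w) u⟫ ≠ 0 := by
  set I := ∫ x, |a * ⟪u, x⟫ + ⟪w, x⟫| * Real.sign ⟪u, x⟫ * ⟪w, x⟫ ∂stdGaussian E
  set J := ∫ x, |a * ⟪u, x⟫ - ⟪w, x⟫| * Real.sign ⟪u, x⟫ * ⟪w, x⟫ ∂stdGaussian E
  have hI_int : Integrable (fun x ↦ |a * ⟪u, x⟫ + ⟪w, x⟫| * Real.sign ⟪u, x⟫ * ⟪w, x⟫)
      (stdGaussian E) := by
    simpa [inner_add_left, real_inner_smul_left] using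
      integrable_abs_inner_mul_sign_inner_mul_inner (a • u + w) u w
  have hJ_int : Integrable (fun x ↦ |a * ⟪u, x⟫ - ⟪w, x⟫| * Real.sign ⟪u, x⟫ * ⟪w, x⟫)
      (stdGaussian E) := by
    simpa [inner_sub_left, real_inner_smul_left] using
      integrable_abs_inner_mul_sign_inner_mul_inner (a • u - w) u w
  have h_pos : 0 < a * (I - J) := by
    rw [← integral_sub hI_int hJ_int, ← integral_const_mul]
    have h_ae : ∀ᵐ x ∂stdGaussian E, 0 < a * (|a * ⟪u, x⟫ + ⟪w, x⟫| * Real.sign ⟪u, x⟫ * ⟪w, x⟫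
        - |a * ⟪u, x⟫ - ⟪w, x⟫| * Real.sign ⟪u, x⟫ * ⟪w, x⟫) := by
      filter_upwards [ae_inner_ne_zero_stdGaussian hu, ae_inner_ne_zero_stdGaussian hw]
        with x hux hwx
      convert mul_sign_mul_abs_sub_abs_pos ha hux hwx using 2
      ring
    rw [integral_pos_iff_support_of_nonneg_ae (h_ae.mono fun x hx ↦ hx.le)
      ((hI_int.sub hJ_int).const_mul a)]
    refine pos_iff_ne_zero.mpr fun h_null ↦ ?_
    obtain ⟨x, hx, hx'⟩ := (h_ae.and (ae_iff.mpr h_null)).exists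
    exact hx.ne' hx'
  have hIJ : I = -J := integral_abs_add_eq_neg_integral_abs_sub huw a
  have hI : ⟪w, populationMap (a • u + w) u⟫ = I := by
    simp [inner_populationMap, inner_add_left, real_inner_smul_left, I]
  rw [hI]
  intro hI0
  rw [hI0, show J = 0 by linarith] at h_pos
  simp at h_pos

theorem exists_eq_smul_of_populationMap_eq {u v : E} (hfix : populationMap v u = u)
    (huv : ⟪u, v⟫ ≠ 0) : ∃ c : ℝ, u = c • v := by
  have hu : u ≠ 0 := by
    rintro rfl
    simp at huv
  set a := ⟪u, v⟫ / ⟪u, u⟫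
  have ha : a ≠ 0 := div_ne_zero huv (inner_self_ne_zero.mpr hu)
  set w := v - a • u
  have huw : ⟪u, w⟫ = 0 := by
    simp only [w, a, inner_sub_right, real_inner_smul_right]
    field_simp [inner_self_ne_zero.mpr hu]
    ring
  have hw : w = 0 := by
    by_contra hw
    apply inner_populationMap_ne_zero hu hw huw ha
    rw [show a • u + w = v by simp [w], hfix, real_inner_comm, huw]
  refine ⟨a⁻¹, ?_⟩
  rw [show v = a • u from sub_eq_zero.mp hw, smul_smul, inv_mul_cancel₀ ha, one_smul]

end StdGaussian

lemma populationMap_toLp {ι : Type*} [Fintype ι] (u v : ι → ℝ) :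
    populationMap (WithLp.toLp 2 v) (WithLp.toLp 2 u) = WithLp.toLp 2
      (∫ x, (|v ⬝ᵥ x| * Real.sign (u ⬝ᵥ x)) • x ∂Measure.pi fun _ ↦ gaussianReal 0 1) := by
  rw [populationMap, ← map_pi_eq_stdGaussian, ← MeasurableEquiv.coe_toLp,
    integral_map_equiv]
  simp only [MeasurableEquiv.toLp_apply, EuclideanSpace.inner_eq_star_dotProduct,
    star_trivial, ← WithLp.toLp_smul]
  simp only [dotProduct_comm _ v, dotProduct_comm _ u]
  exact (PiLp.continuousLinearEquiv 2 ℝ fun _ : ι ↦ ℝ).symm.integral_comp_comm _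

theorem stmt17_general (u v : Fin 2 → ℝ)
    (hfix : (∫ x : Fin 2 → ℝ,
        (|v ⬝ᵥ x| * Real.sign (u ⬝ᵥ x)) • x
        ∂(MeasureTheory.Measure.pi fun _ => gaussianReal 0 1)) = u)
    (hnotorth : u ⬝ᵥ v ≠ 0) :
    ∃ c : ℝ, u = c • v := by
  obtain ⟨c, hc⟩ := exists_eq_smul_of_populationMap_eq (u := WithLp.toLp 2 u)
    (v := WithLp.toLp 2 v) (by rw [populationMap_toLp, hfix])
    (by simpa [EuclideanSpace.inner_eq_star_dotProduct, dotProduct_comm] using hnotorth)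
  exact ⟨c, by simpa using congrArg WithLp.ofLp hc⟩

/-- In dimension 2, for `S = vvᵀ` with `v ≠ 0`, any fixed point `u` of the population
map `u ↦ 𝔼[|vᵀx| sign(uᵀx) x]` (for standard Gaussian `x`) that is not orthogonal to
`v` must be parallel to `v`. -/
theorem stmt17 (u v : Fin 2 → ℝ) (hv : v ≠ 0) (hu : u ≠ 0)
    (hfix : (∫ x : Fin 2 → ℝ,
        (|v ⬝ᵥ x| * Real.sign (u ⬝ᵥ x)) • x
        ∂(MeasureTheory.Measure.pi fun _ => gaussianReal 0 1)) = u)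
    (hnotorth : u ⬝ᵥ v ≠ 0) :
    ∃ c : ℝ, u = c • v :=
  stmt17_general u v hfix hnotorth
end
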